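/- For fuzzy subgroups μ₁, μ₂ of a group G and any α ∈ (0,1), the strong α-level of the product equals the setwise product of the strong α-levels: {x | (μ₁ μ₂)(x) > α} = {y | μ₁(y) > α} · {z | μ₂(z) > α}, where (μ₁ μ₂)(x) = sup{min(μ₁(y), μ₂(z)) | yz = x}. -/
import Mathlib


open scoped Pointwise

/-- A fuzzy subgroup of `G`: a `[0,1]`-valued function with
`μ(xy⁻¹) ≥ min (μ x) (μ y)`. -/
def IsFuzzySubgroup {G : Type*} [Group G] (μ : G → ℝ) : Prop :=
  (∀ x, μ x ∈ Set.Icc (0:ℝ) 1) ∧ ∀ x y : G, min (μ x) (μ y) ≤ μ (x * y⁻¹)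

/-- The product of fuzzy subsets: `(μ₁ μ₂)(x) = sup {min (μ₁ y) (μ₂ z) | yz = x}`. -/
noncomputable def fuzzyMul {G : Type*} [Group G] (μ₁ μ₂ : G → ℝ) : G → ℝ :=
  fun x => sSup {r : ℝ | ∃ y z : G, y * z = x ∧ r = min (μ₁ y) (μ₂ z)}

theorem strong_level_fuzzyMul {G : Type*} [Group G] (μ₁ μ₂ : G → ℝ)
    (h₁ : IsFuzzySubgroup μ₁) (h₂ : IsFuzzySubgroup μ₂)
    (α : ℝ) (hα : α ∈ Set.Ioo (0:ℝ) 1) :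
    {x : G | α < fuzzyMul μ₁ μ₂ x} = {y : G | α < μ₁ y} * {z : G | α < μ₂ z} := by
  ext x
  have hbdd : BddAbove {r : ℝ | ∃ y z : G, y * z = x ∧ r = min (μ₁ y) (μ₂ z)} := by
    refine ⟨1, ?_⟩
    rintro r ⟨y, z, -, rfl⟩
    exact le_trans (min_le_left _ _) (h₁.1 y).2
  have hne : {r : ℝ | ∃ y z : G, y * z = x ∧ r = min (μ₁ y) (μ₂ z)}.Nonempty :=
    ⟨min (μ₁ x) (μ₂ 1), x, 1, mul_one x, rfl⟩
  constructor
  · intro hx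
    obtain ⟨r, ⟨y, z, hyz, rfl⟩, hr⟩ := (lt_csSup_iff hbdd hne).mp hx
    exact ⟨y, lt_of_lt_of_le hr (min_le_left _ _), z,
      lt_of_lt_of_le hr (min_le_right _ _), hyz⟩
  · rintro ⟨y, hy, z, hz, rfl⟩
    exact lt_of_lt_of_le (lt_min hy hz)
      (le_csSup hbdd ⟨y, z, rfl, rfl⟩)
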